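/- Let H, K₁, K₂ be separable complex Hilbert spaces with unilateral shifts S_H, S_{K₁}, S_{K₂} on ℓ²(ℕ,H), ℓ²(ℕ,K₁), ℓ²(ℕ,K₂). Let T ∈ B(ℓ²(ℕ,H)) commute with S_H and suppose T = W₁ Y₁ = W₂ Y₂, where each Wᵢ : ℓ²(ℕ,Kᵢ) → ℓ²(ℕ,H) is an isometry with Wᵢ ∘ S_{Kᵢ} = S_H ∘ Wᵢ and each Yᵢ : ℓ²(ℕ,H) → ℓ²(ℕ,Kᵢ) has dense range and satisfies Yᵢ ∘ S_H = S_{Kᵢ} ∘ Yᵢ. Then U := W₂* W₁ : ℓ²(ℕ,K₁) → ℓ²(ℕ,K₂) is unitary, U ∘ S_{K₁} = S_{K₂} ∘ U, W₁ = W₂ ∘ U, and Y₂ = U ∘ Y₁. -/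

import Mathlib

/-!
Since `Yᵢ` has dense range and `Wᵢ` has closed range, both `W₁` and `W₂` have range equal to the
closure of the range of `T`. As `W₂* W₂ = 1`, the adjoint `W₂*` inverts `W₂` on that common range,
so `U = W₂* W₁` satisfies `W₂ U = W₁` and is a surjective isometry. The remaining identities follow
by cancelling the injective `W₂` on the left.
-/

noncomputable section

open scoped ENNReal InnerProductSpace

set_option linter.unusedSectionVars false

namespace Shift

variable (H : Type*) [NormedAddCommGroup H] [InnerProductSpace ℂ H]

/-- The underlying function of the unilateral shift: `(shiftFun x) 0 = 0`,
`(shiftFun x) (n+1) = x n`. -/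
def shiftFun (x : ℕ → H) : ℕ → H
  | 0 => 0
  | n + 1 => x n

variable {H}

theorem memℓp_shiftFun {x : ℕ → H} (hx : Memℓp x 2) : Memℓp (shiftFun H x) 2 := by
  apply memℓp_gen
  have h2 : (0:ℝ) < (2 : ℝ≥0∞).toReal := by norm_num
  have hs : Summable fun n : ℕ => ‖x n‖ ^ (2 : ℝ≥0∞).toReal := (memℓp_gen_iff h2).1 hx
  exact (summable_nat_add_iff 1).1 (by simpa [shiftFun] using hs)

theorem tsum_shiftFun (x : ℕ → H) (hx : Memℓp x 2) :
    (∑' n, ‖shiftFun H x n‖ ^ (2 : ℝ≥0∞).toReal) = ∑' n, ‖x n‖ ^ (2 : ℝ≥0∞).toReal := by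
  have h2 : (0:ℝ) < (2 : ℝ≥0∞).toReal := by norm_num
  rw [Summable.tsum_eq_zero_add (memℓp_gen_iff h2 |>.1 (memℓp_shiftFun hx))]
  simp [shiftFun]

variable (H)

/-- The unilateral shift as a linear isometry on `ℓ²(ℕ, H)`. -/
def shiftLi : lp (fun _ : ℕ => H) 2 →ₗᵢ[ℂ] lp (fun _ : ℕ => H) 2 where
  toFun x := ⟨shiftFun H x, memℓp_shiftFun (lp.memℓp x)⟩
  map_add' x y := by
    apply lp.ext
    funext n
    change shiftFun H (⇑(x + y)) n = shiftFun H x n + shiftFun H y n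
    cases n <;> simp [shiftFun, lp.coeFn_add]
  map_smul' c x := by
    apply lp.ext
    funext n
    cases n <;> simp [shiftFun, lp.coeFn_smul]
  norm_map' x := by
    have h2 : (0:ℝ) < (2 : ℝ≥0∞).toReal := by norm_num
    rw [lp.norm_eq_tsum_rpow h2, lp.norm_eq_tsum_rpow h2]
    congr 1
    exact tsum_shiftFun x (lp.memℓp x)

/-- The unilateral shift `S_H` on `ℓ²(ℕ, H)`, as a continuous linear map:
`(shift H x) 0 = 0` and `(shift H x) (n+1) = x n`. -/
def shift : lp (fun _ : ℕ => H) 2 →L[ℂ] lp (fun _ : ℕ => H) 2 :=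
  (shiftLi H).toContinuousLinearMap

variable {H}

open Set ContinuousLinearMap

theorem _root_.range_subset_of_comp_eq_comp_of_denseRange {X Y Y' Z : Type*} [TopologicalSpace Y]
    [TopologicalSpace Z] {f : Y → Z} {g : Y' → Z} {y : X → Y} {y' : X → Y'}
    (hf : Continuous f) (hg : IsClosed (range g)) (hy : DenseRange y)
    (h : ∀ x, f (y x) = g (y' x)) : range f ⊆ range g :=
  calc range f ⊆ closure (f '' range y) := hf.range_subset_closure_image_dense hy
    _ ⊆ range g := closure_minimal (by rintro _ ⟨_, ⟨x, rfl⟩, rfl⟩; exact ⟨y' x, (h x).symm⟩) hg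

theorem _root_.Isometry.of_comp {α β γ : Type*} [PseudoEMetricSpace α] [PseudoEMetricSpace β]
    [PseudoEMetricSpace γ] {g : β → γ} {f : α → β} (hg : Isometry g) (hgf : Isometry (g ∘ f)) :
    Isometry f := fun x y => by rw [← hg (f x) (f y)]; exact hgf x y

section Hilbert

variable {𝕜 E F₁ F₂ : Type*} [RCLike 𝕜]
  [NormedAddCommGroup E] [InnerProductSpace 𝕜 E] [CompleteSpace E]
  [NormedAddCommGroup F₁] [InnerProductSpace 𝕜 F₁]
  [NormedAddCommGroup F₂] [InnerProductSpace 𝕜 F₂] [CompleteSpace F₂]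
  {W₁ : F₁ →L[𝕜] E} {W₂ : F₂ →L[𝕜] E}

theorem _root_.ContinuousLinearMap.adjoint_apply_of_isometry (hW₂ : Isometry W₂) (y : F₂) :
    adjoint W₂ (W₂ y) = y := by
  rw [← comp_apply, (isometry_iff_adjoint_comp_self W₂).1 hW₂,
    one_apply_eq_self]

theorem _root_.ContinuousLinearMap.comp_adjoint_comp_of_range_subset (hW₂ : Isometry W₂)
    (h : range W₁ ⊆ range W₂) :
    W₂ ∘L (adjoint W₂ ∘L W₁) = W₁ := by
  ext x
  obtain ⟨y, hy⟩ := h ⟨x, rfl⟩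
  simp only [comp_apply, ← hy, adjoint_apply_of_isometry hW₂]

theorem _root_.ContinuousLinearMap.surjective_adjoint_comp_of_range_subset (hW₂ : Isometry W₂)
    (h : range W₂ ⊆ range W₁) :
    Function.Surjective (adjoint W₂ ∘L W₁) := fun y => by
  obtain ⟨x, hx⟩ := h ⟨y, rfl⟩
  exact ⟨x, by rw [comp_apply, hx, adjoint_apply_of_isometry hW₂]⟩

end Hilbert

theorem inner_outer_factorization_of_commutant_unique_general
    {H K₁ K₂ : Type*} [NormedAddCommGroup H] [InnerProductSpace ℂ H] [CompleteSpace H]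
    [NormedAddCommGroup K₁] [InnerProductSpace ℂ K₁] [CompleteSpace K₁]
    [NormedAddCommGroup K₂] [InnerProductSpace ℂ K₂] [CompleteSpace K₂]
    (T : lp (fun _ : ℕ => H) 2 →L[ℂ] lp (fun _ : ℕ => H) 2)
    (W₁ : lp (fun _ : ℕ => K₁) 2 →L[ℂ] lp (fun _ : ℕ => H) 2)
    (W₂ : lp (fun _ : ℕ => K₂) 2 →L[ℂ] lp (fun _ : ℕ => H) 2)
    (Y₁ : lp (fun _ : ℕ => H) 2 →L[ℂ] lp (fun _ : ℕ => K₁) 2)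
    (Y₂ : lp (fun _ : ℕ => H) 2 →L[ℂ] lp (fun _ : ℕ => K₂) 2)
    (hW₁ : Isometry W₁) (hW₂ : Isometry W₂)
    (hW₁S : W₁.comp (shift K₁) = (shift H).comp W₁)
    (hW₂S : W₂.comp (shift K₂) = (shift H).comp W₂)
    (hY₁ : DenseRange ⇑Y₁) (hY₂ : DenseRange ⇑Y₂)
    (hfac₁ : T = W₁.comp Y₁) (hfac₂ : T = W₂.comp Y₂) :
    Isometry ((ContinuousLinearMap.adjoint W₂).comp W₁) ∧
    Function.Surjective ⇑((ContinuousLinearMap.adjoint W₂).comp W₁) ∧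
    ((ContinuousLinearMap.adjoint W₂).comp W₁).comp (shift K₁) =
      (shift K₂).comp ((ContinuousLinearMap.adjoint W₂).comp W₁) ∧
    W₁ = W₂.comp ((ContinuousLinearMap.adjoint W₂).comp W₁) ∧
    Y₂ = ((ContinuousLinearMap.adjoint W₂).comp W₁).comp Y₁ := by
  set U := adjoint W₂ ∘L W₁
  have hfac : W₁ ∘L Y₁ = W₂ ∘L Y₂ := hfac₁.symm.trans hfac₂
  have hU : W₂ ∘L U = W₁ := comp_adjoint_comp_of_range_subset hW₂ <|
    range_subset_of_comp_eq_comp_of_denseRange W₁.continuous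
      hW₂.isClosedEmbedding.isClosed_range hY₁ fun x => congr($hfac x)
  have hsurj : Function.Surjective U := surjective_adjoint_comp_of_range_subset hW₂ <|
    range_subset_of_comp_eq_comp_of_denseRange W₂.continuous
      hW₁.isClosedEmbedding.isClosed_range hY₂ fun x => congr($hfac.symm x)
  have hUisom : Isometry U := hW₂.of_comp (by rw [← coe_comp, hU]; exact hW₁)
  refine ⟨hUisom, hsurj, cancel_left hW₂.injective ?_, hU.symm,
    cancel_left hW₂.injective ?_⟩
  · calc W₂ ∘L (U ∘L shift K₁)
        _ = W₁ ∘L shift K₁ := by rw [← comp_assoc, hU]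
        _ = shift H ∘L (W₂ ∘L U) := by rw [hW₁S, hU]
        _ = W₂ ∘L (shift K₂ ∘L U) := by rw [← comp_assoc, ← hW₂S, comp_assoc]
  · rw [← comp_assoc, hU, hfac]

/-- uniqueness of the inner-outer factorization of an operator commuting
with the shift: if `T = W₁ Y₁ = W₂ Y₂` with `Wᵢ` inner and `Yᵢ` outer, then `U = W₂* W₁`
is unitary, intertwines the shifts, `W₁ = W₂ U` and `Y₂ = U Y₁`. -/
theorem inner_outer_factorization_of_commutant_unique
    {H K₁ K₂ : Type*} [NormedAddCommGroup H] [InnerProductSpace ℂ H] [CompleteSpace H]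
    [TopologicalSpace.SeparableSpace H]
    [NormedAddCommGroup K₁] [InnerProductSpace ℂ K₁] [CompleteSpace K₁]
    [TopologicalSpace.SeparableSpace K₁]
    [NormedAddCommGroup K₂] [InnerProductSpace ℂ K₂] [CompleteSpace K₂]
    [TopologicalSpace.SeparableSpace K₂]
    (T : lp (fun _ : ℕ => H) 2 →L[ℂ] lp (fun _ : ℕ => H) 2)
    (hT : T.comp (shift H) = (shift H).comp T)
    (W₁ : lp (fun _ : ℕ => K₁) 2 →L[ℂ] lp (fun _ : ℕ => H) 2)
    (W₂ : lp (fun _ : ℕ => K₂) 2 →L[ℂ] lp (fun _ : ℕ => H) 2)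
    (Y₁ : lp (fun _ : ℕ => H) 2 →L[ℂ] lp (fun _ : ℕ => K₁) 2)
    (Y₂ : lp (fun _ : ℕ => H) 2 →L[ℂ] lp (fun _ : ℕ => K₂) 2)
    (hW₁ : Isometry W₁) (hW₂ : Isometry W₂)
    (hW₁S : W₁.comp (shift K₁) = (shift H).comp W₁)
    (hW₂S : W₂.comp (shift K₂) = (shift H).comp W₂)
    (hY₁ : DenseRange ⇑Y₁) (hY₂ : DenseRange ⇑Y₂)
    (hY₁S : Y₁.comp (shift H) = (shift K₁).comp Y₁)
    (hY₂S : Y₂.comp (shift H) = (shift K₂).comp Y₂)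
    (hfac₁ : T = W₁.comp Y₁) (hfac₂ : T = W₂.comp Y₂) :
    Isometry ((ContinuousLinearMap.adjoint W₂).comp W₁) ∧
    Function.Surjective ⇑((ContinuousLinearMap.adjoint W₂).comp W₁) ∧
    ((ContinuousLinearMap.adjoint W₂).comp W₁).comp (shift K₁) =
      (shift K₂).comp ((ContinuousLinearMap.adjoint W₂).comp W₁) ∧
    W₁ = W₂.comp ((ContinuousLinearMap.adjoint W₂).comp W₁) ∧
    Y₂ = ((ContinuousLinearMap.adjoint W₂).comp W₁).comp Y₁ :=
  inner_outer_factorization_of_commutant_unique_general T W₁ W₂ Y₁ Y₂ hW₁ hW₂ hW₁S hW₂S hY₁ hY₂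
    hfac₁ hfac₂

end Shift
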